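/- For each p∈Ī₂∪J₃∪I₅, the operator ∂_{t_p} (defined by ∂_{t_p}(x^{α,i⃗})=i_p x^{α,i⃗−1_{[p]}}) is a derivation of the Lie algebra 𝒦. -/

import Mathlib

noncomputable section

/-- `ι_i = ℓ₁ + ⋯ + ℓ_i`. -/
def iot (ℓ : ℕ → ℕ) (i : ℕ) : ℕ := ∑ k ∈ Finset.Icc 1 i, ℓ k

/-- `I_{i,j} = {ι_{i-1}+1, …, ι_j}`. -/
def iSet (ℓ : ℕ → ℕ) (i j : ℕ) : Finset ℕ := Finset.Icc (iot ℓ (i - 1) + 1) (iot ℓ j)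

/-- The index-shift map `p ↦ p̄` (shift by `ι₆`). -/
def bar (ℓ : ℕ → ℕ) (p : ℕ) : ℕ := if p ≤ iot ℓ 6 then p + iot ℓ 6 else p - iot ℓ 6

/-- `K̄ = {p̄ : p ∈ K}`. -/
def barSet (ℓ : ℕ → ℕ) (K : Finset ℕ) : Finset ℕ := K.image (bar ℓ)

/-- `J_{i,j} = I_{i,j} ∪ Ī_{i,j}`. -/
def jSet (ℓ : ℕ → ℕ) (i j : ℕ) : Finset ℕ := iSet ℓ i j ∪ barSet ℓ (iSet ℓ i j)

/-- The semigroup `𝒥 = 𝒥₀ × 𝒥₁`, encoded as functions `ℕ → ℕ`; `j0 = true`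
means `𝒥₀ = ℕ` and `j0 = false` means `𝒥₀ = {0}`. -/
def jIdx (ℓ : ℕ → ℕ) (j0 : Bool) : Set (ℕ → ℕ) :=
  {i | (j0 = false → i 0 = 0) ∧
    ∀ p, 1 ≤ p →
      (p ∈ iSet ℓ 1 2 ∪ iSet ℓ 4 4 ∪ barSet ℓ (iSet ℓ 1 1) ∨ 2 * iot ℓ 6 < p) → i p = 0}

/-- `σ_p` (with `σ_p = σ_{p̄}`). -/
def sgm (F : Type*) [Field F] (ℓ : ℕ → ℕ) (p : ℕ) : ℕ → F :=
  let q := if p ≤ iot ℓ 6 then p else p - iot ℓ 6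
  if q ∈ iSet ℓ 1 3 then -Pi.single q (1 : F) - Pi.single (q + iot ℓ 6) (1 : F)
  else if q ∈ iSet ℓ 4 5 then -Pi.single q (1 : F)
  else 0

/-- The underlying space `𝒜`: the free `F`-module with basis `Γ × 𝒥`. -/
abbrev CA (F : Type*) [Field F] (ℓ : ℕ → ℕ) (Γ : AddSubgroup (ℕ → F)) (j0 : Bool) : Type _ :=
  (↥Γ × ↥(jIdx ℓ j0)) →₀ F

/-- The basis monomial `x^{α,i⃗}`, with the convention that it is `0` if `(α,i⃗) ∉ Γ × 𝒥`. -/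
def X (F : Type*) [Field F] (ℓ : ℕ → ℕ) (Γ : AddSubgroup (ℕ → F)) (j0 : Bool)
    (α : ℕ → F) (i : ℕ → ℕ) : CA F ℓ Γ j0 :=
  @dite _ (α ∈ Γ ∧ i ∈ jIdx ℓ j0) (Classical.dec _)
    (fun h => Finsupp.single (⟨α, h.1⟩, ⟨i, h.2⟩) 1) (fun _ => 0)

variable (F : Type*) [Field F] (ℓ : ℕ → ℕ) (Γ : AddSubgroup (ℕ → F)) (j0 : Bool)

/-- The commutative associative product on `𝒜`. -/
def mulA (u v : CA F ℓ Γ j0) : CA F ℓ Γ j0 :=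
  u.sum fun a ca => v.sum fun b cb =>
    (ca * cb) • X F ℓ Γ j0 (a.1.1 + b.1.1) (a.2.1 + b.2.1)

/-- The grading operator `∂*_p`. -/
def pstar (p : ℕ) (u : CA F ℓ Γ j0) : CA F ℓ Γ j0 :=
  u.sum fun a ca => (ca * a.1.1 p) • Finsupp.single a 1

/-- The down-grading operator `∂_{t_p}`. -/
def pt (p : ℕ) (u : CA F ℓ Γ j0) : CA F ℓ Γ j0 :=
  u.sum fun a ca => (ca * (a.2.1 p : F)) • X F ℓ Γ j0 a.1.1 (a.2.1 - Pi.single p 1)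

/-- `∂_p = ∂*_p + ∂_{t_p}`. -/
def dd (p : ℕ) (u : CA F ℓ Γ j0) : CA F ℓ Γ j0 := pstar F ℓ Γ j0 p u + pt F ℓ Γ j0 p u

/-- `∂ = Σ_{p∈J_{1,3}∪I_{4,5}} ∂*_p + Σ_{p∈I₆∪Ī_{4,6}} t_p ∂_{t_p}`. -/
def Dop (u : CA F ℓ Γ j0) : CA F ℓ Γ j0 :=
  (∑ p ∈ jSet ℓ 1 3 ∪ iSet ℓ 4 5, pstar F ℓ Γ j0 p u) +
    ∑ p ∈ iSet ℓ 6 6 ∪ barSet ℓ (iSet ℓ 4 6),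
      mulA F ℓ Γ j0 (X F ℓ Γ j0 0 (Pi.single p 1)) (pt F ℓ Γ j0 p u)

/-- The contact bracket (2.18):
`[u,v] = Σ_{p∈I} x^{σ_p}(∂_p u·∂_{p̄} v − ∂_{p̄} u·∂_p v) + (2−∂)(u)·∂₀(v) − ∂₀(u)·(2−∂)(v)`. -/
def brk (u v : CA F ℓ Γ j0) : CA F ℓ Γ j0 :=
  (∑ p ∈ iSet ℓ 1 6,
      mulA F ℓ Γ j0 (X F ℓ Γ j0 (sgm F ℓ p) 0)
        (mulA F ℓ Γ j0 (dd F ℓ Γ j0 p u) (dd F ℓ Γ j0 (bar ℓ p) v) -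
          mulA F ℓ Γ j0 (dd F ℓ Γ j0 (bar ℓ p) u) (dd F ℓ Γ j0 p v))) +
    mulA F ℓ Γ j0 ((2 : F) • u - Dop F ℓ Γ j0 u) (dd F ℓ Γ j0 0 v) -
    mulA F ℓ Γ j0 (dd F ℓ Γ j0 0 u) ((2 : F) • v - Dop F ℓ Γ j0 v)

/-! `∂_{t_p}` satisfies the Leibniz rule for the product, commutes with every `∂*_q` and `∂_{t_q}`
(hence with every `∂_q`) and kills the coefficients `x^{σ_q}`. For `p ∉ I₆ ∪ Ī_{4,6}` it also
kills the monomials `t_q` occurring in `∂`, so it commutes with `∂`. Every term of the bracket is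
a product of such expressions, so the Leibniz rule for the product yields it for the bracket. -/

theorem Finsupp.sum_mul_smul_eq_linearCombination {α R M : Type*} [CommSemiring R]
    [AddCommMonoid M] [Module R M] (u : α →₀ R) (k : α → R) (m : α → M) :
    (u.sum fun a c => (c * k a) • m a) = Finsupp.linearCombination R (fun a => k a • m a) u := by
  simp [Finsupp.linearCombination_apply, mul_smul]

lemma iot_mono (ℓ : ℕ → ℕ) {i j : ℕ} (h : i ≤ j) : iot ℓ i ≤ iot ℓ j :=
  Finset.sum_le_sum_of_subset (Finset.Icc_subset_Icc_right h)

lemma jIdx_add {ℓ : ℕ → ℕ} {j0 : Bool} {i j : ℕ → ℕ}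
    (hi : i ∈ jIdx ℓ j0) (hj : j ∈ jIdx ℓ j0) : i + j ∈ jIdx ℓ j0 :=
  ⟨fun h => by simp [hi.1 h, hj.1 h],
    fun p hp hbad => by simp [hi.2 p hp hbad, hj.2 p hp hbad]⟩

lemma jIdx_sub {ℓ : ℕ → ℕ} {j0 : Bool} {i : ℕ → ℕ}
    (hi : i ∈ jIdx ℓ j0) (s : ℕ → ℕ) : i - s ∈ jIdx ℓ j0 :=
  ⟨fun h => by simp [hi.1 h], fun p hp hbad => by simp [hi.2 p hp hbad]⟩

def pstarLin (p : ℕ) : Module.End F (CA F ℓ Γ j0) :=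
  Finsupp.linearCombination F fun a => a.1.1 p • Finsupp.single a 1

def ptLin (p : ℕ) : Module.End F (CA F ℓ Γ j0) :=
  Finsupp.linearCombination F fun a => (a.2.1 p : F) • X F ℓ Γ j0 a.1.1 (a.2.1 - Pi.single p 1)

def mulBil : CA F ℓ Γ j0 →ₗ[F] CA F ℓ Γ j0 →ₗ[F] CA F ℓ Γ j0 :=
  Finsupp.linearCombination F fun a =>
    Finsupp.linearCombination F fun b => X F ℓ Γ j0 (a.1.1 + b.1.1) (a.2.1 + b.2.1)

section

variable {F ℓ Γ j0}

lemma pstarLin_apply (p : ℕ) (u : CA F ℓ Γ j0) : pstarLin F ℓ Γ j0 p u = pstar F ℓ Γ j0 p u :=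
  (Finsupp.sum_mul_smul_eq_linearCombination _ _ _).symm

lemma ptLin_apply (p : ℕ) (u : CA F ℓ Γ j0) : ptLin F ℓ Γ j0 p u = pt F ℓ Γ j0 p u :=
  (Finsupp.sum_mul_smul_eq_linearCombination _ _ _).symm

lemma mulBil_apply (u v : CA F ℓ Γ j0) : mulBil F ℓ Γ j0 u v = mulA F ℓ Γ j0 u v := by
  simp [mulBil, mulA, Finsupp.linearCombination_apply, Finsupp.smul_sum, mul_smul]

lemma X_of_mem {α : ℕ → F} {i : ℕ → ℕ} (hα : α ∈ Γ) (hi : i ∈ jIdx ℓ j0) :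
    X F ℓ Γ j0 α i = Finsupp.single (⟨α, hα⟩, ⟨i, hi⟩) 1 := by
  rw [X, dif_pos ⟨hα, hi⟩]

lemma X_of_notMem {α : ℕ → F} {i : ℕ → ℕ} (h : ¬(α ∈ Γ ∧ i ∈ jIdx ℓ j0)) :
    X F ℓ Γ j0 α i = 0 := by
  rw [X, dif_neg h]

lemma linearMap_ext_X {M : Type*} [AddCommGroup M] [Module F M] {φ ψ : CA F ℓ Γ j0 →ₗ[F] M}
    (h : ∀ α ∈ Γ, ∀ i ∈ jIdx ℓ j0, φ (X F ℓ Γ j0 α i) = ψ (X F ℓ Γ j0 α i)) : φ = ψ :=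
  Finsupp.lhom_ext fun ⟨⟨α, hα⟩, ⟨i, hi⟩⟩ c => by
    rw [← Finsupp.smul_single_one, ← X_of_mem hα hi, map_smul, map_smul, h α hα i hi]

lemma pstarLin_X (p : ℕ) {α : ℕ → F} {i : ℕ → ℕ} (hα : α ∈ Γ) (hi : i ∈ jIdx ℓ j0) :
    pstarLin F ℓ Γ j0 p (X F ℓ Γ j0 α i) = α p • X F ℓ Γ j0 α i := by
  rw [X_of_mem hα hi, pstarLin, Finsupp.linearCombination_single, one_smul]

lemma ptLin_X (p : ℕ) {α : ℕ → F} {i : ℕ → ℕ} (hα : α ∈ Γ) (hi : i ∈ jIdx ℓ j0) :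
    ptLin F ℓ Γ j0 p (X F ℓ Γ j0 α i) = (i p : F) • X F ℓ Γ j0 α (i - Pi.single p 1) := by
  rw [X_of_mem hα hi, ptLin, Finsupp.linearCombination_single, one_smul]

lemma ptLin_X_of_eq_zero {p : ℕ} (α : ℕ → F) {i : ℕ → ℕ} (h : i p = 0) :
    ptLin F ℓ Γ j0 p (X F ℓ Γ j0 α i) = 0 := by
  by_cases hm : α ∈ Γ ∧ i ∈ jIdx ℓ j0
  · rw [ptLin_X p hm.1 hm.2, h, Nat.cast_zero, zero_smul]
  · rw [X_of_notMem hm, map_zero]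

lemma mulBil_X_X {α β : ℕ → F} {i j : ℕ → ℕ} (hα : α ∈ Γ) (hi : i ∈ jIdx ℓ j0)
    (hβ : β ∈ Γ) (hj : j ∈ jIdx ℓ j0) :
    mulBil F ℓ Γ j0 (X F ℓ Γ j0 α i) (X F ℓ Γ j0 β j) = X F ℓ Γ j0 (α + β) (i + j) := by
  simp [X_of_mem hα hi, X_of_mem hβ hj, mulBil]

/-- Lowering the `p`-th exponent before or after adding `j` agrees unless `i p = 0`, where the
coefficient `i p` vanishes anyway. -/
lemma natCast_smul_X_sub_single_add (α : ℕ → F) {p : ℕ} (i j : ℕ → ℕ) :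
    (i p : F) • X F ℓ Γ j0 α (i - Pi.single p 1 + j) =
      (i p : F) • X F ℓ Γ j0 α (i + j - Pi.single p 1) := by
  by_cases hip : i p = 0
  · simp [hip]
  · congr 2
    funext q
    by_cases hq : q = p
    · subst hq; simp only [Pi.add_apply, Pi.sub_apply, Pi.single_eq_same]; omega
    · simp [Pi.single_eq_of_ne hq]

lemma ptLin_mulBil (p : ℕ) (u v : CA F ℓ Γ j0) :
    ptLin F ℓ Γ j0 p (mulBil F ℓ Γ j0 u v) =
      mulBil F ℓ Γ j0 (ptLin F ℓ Γ j0 p u) v + mulBil F ℓ Γ j0 u (ptLin F ℓ Γ j0 p v) := by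
  suffices (mulBil F ℓ Γ j0).compr₂ (ptLin F ℓ Γ j0 p) =
      (mulBil F ℓ Γ j0).compl₁₂ (ptLin F ℓ Γ j0 p) LinearMap.id +
        (mulBil F ℓ Γ j0).compl₁₂ LinearMap.id (ptLin F ℓ Γ j0 p) from
    LinearMap.congr_fun₂ this u v
  refine linearMap_ext_X fun α hα i hi => linearMap_ext_X fun β hβ j hj => ?_
  simp only [LinearMap.compr₂_apply, LinearMap.compl₁₂_apply, LinearMap.add_apply,
    LinearMap.id_apply]
  rw [mulBil_X_X hα hi hβ hj, ptLin_X p (add_mem hα hβ) (jIdx_add hi hj), ptLin_X p hα hi,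
    ptLin_X p hβ hj, map_smul, map_smul, LinearMap.smul_apply,
    mulBil_X_X hα (jIdx_sub hi _) hβ hj, mulBil_X_X hα hi hβ (jIdx_sub hj _),
    natCast_smul_X_sub_single_add, add_comm i (j - _), natCast_smul_X_sub_single_add,
    add_comm j i, Pi.add_apply, Nat.cast_add, add_smul]

lemma commute_ptLin_pstarLin (p q : ℕ) :
    Commute (ptLin F ℓ Γ j0 p) (pstarLin F ℓ Γ j0 q) :=
  linearMap_ext_X fun α hα i hi => by
    simp only [Module.End.mul_apply]
    rw [pstarLin_X q hα hi, map_smul, ptLin_X p hα hi, map_smul, pstarLin_X q hα (jIdx_sub hi _),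
      smul_comm]

lemma commute_ptLin_ptLin (p q : ℕ) :
    Commute (ptLin F ℓ Γ j0 p) (ptLin F ℓ Γ j0 q) :=
  linearMap_ext_X fun α hα i hi => by
    simp only [Module.End.mul_apply]
    rw [ptLin_X q hα hi, map_smul, ptLin_X p hα (jIdx_sub hi _), ptLin_X p hα hi, map_smul,
      ptLin_X q hα (jIdx_sub hi _), smul_smul, smul_smul, tsub_tsub, tsub_tsub,
      add_comm (Pi.single q 1)]
    by_cases hpq : p = q
    · rw [hpq]
    · simp [Pi.single_eq_of_ne hpq, Pi.single_eq_of_ne (Ne.symm hpq), mul_comm]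

end

section

variable {F ℓ Γ j0} (D : Module.End F (CA F ℓ Γ j0))

lemma map_dd_of_commute (hpstar : ∀ q, Commute D (pstarLin F ℓ Γ j0 q))
    (hpt : ∀ q, Commute D (ptLin F ℓ Γ j0 q)) (q : ℕ) (u : CA F ℓ Γ j0) :
    D (dd F ℓ Γ j0 q u) = dd F ℓ Γ j0 q (D u) := by
  simp only [dd, ← pstarLin_apply, ← ptLin_apply, map_add, ← Module.End.mul_apply,
    (hpstar q).eq, (hpt q).eq]

lemma map_Dop_of_commute
    (hmul : ∀ u v, D (mulBil F ℓ Γ j0 u v) = mulBil F ℓ Γ j0 (D u) v + mulBil F ℓ Γ j0 u (D v))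
    (hpstar : ∀ q, Commute D (pstarLin F ℓ Γ j0 q)) (hpt : ∀ q, Commute D (ptLin F ℓ Γ j0 q))
    (ht : ∀ q ∈ iSet ℓ 6 6 ∪ barSet ℓ (iSet ℓ 4 6), D (X F ℓ Γ j0 0 (Pi.single q 1)) = 0)
    (u : CA F ℓ Γ j0) : D (Dop F ℓ Γ j0 u) = Dop F ℓ Γ j0 (D u) := by
  simp only [Dop, ← pstarLin_apply, ← ptLin_apply, ← mulBil_apply, map_add, map_sum]
  congr 1
  · exact Finset.sum_congr rfl fun q _ => LinearMap.congr_fun (hpstar q).eq u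
  · refine Finset.sum_congr rfl fun q hq => ?_
    rw [hmul, ht q hq, map_zero, LinearMap.zero_apply, zero_add]
    exact congrArg _ (LinearMap.congr_fun (hpt q).eq u)

lemma map_brk_of_commute
    (hmul : ∀ u v, D (mulBil F ℓ Γ j0 u v) = mulBil F ℓ Γ j0 (D u) v + mulBil F ℓ Γ j0 u (D v))
    (hpstar : ∀ q, Commute D (pstarLin F ℓ Γ j0 q)) (hpt : ∀ q, Commute D (ptLin F ℓ Γ j0 q))
    (hσ : ∀ q, D (X F ℓ Γ j0 (sgm F ℓ q) 0) = 0)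
    (ht : ∀ q ∈ iSet ℓ 6 6 ∪ barSet ℓ (iSet ℓ 4 6), D (X F ℓ Γ j0 0 (Pi.single q 1)) = 0)
    (u v : CA F ℓ Γ j0) :
    D (brk F ℓ Γ j0 u v) = brk F ℓ Γ j0 (D u) v + brk F ℓ Γ j0 u (D v) := by
  have hdd := map_dd_of_commute D hpstar hpt
  have hDop := map_Dop_of_commute D hmul hpstar hpt ht
  simp only [brk, ← mulBil_apply, map_add, map_sub, map_sum, map_smul, hmul, hdd, hDop, hσ,
    map_zero, LinearMap.zero_apply, zero_add, LinearMap.sub_apply, LinearMap.smul_apply,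
    Finset.sum_add_distrib, Finset.sum_sub_distrib, smul_add]
  abel

end

lemma mem_iSet {ℓ : ℕ → ℕ} {i j p : ℕ} : p ∈ iSet ℓ i j ↔ iot ℓ (i - 1) < p ∧ p ≤ iot ℓ j := by
  rw [iSet, Finset.mem_Icc, Nat.add_one_le_iff]

lemma mem_barSet_iSet {ℓ : ℕ → ℕ} {i j p : ℕ} (hj : j ≤ 6) :
    p ∈ barSet ℓ (iSet ℓ i j) ↔ iot ℓ 6 + iot ℓ (i - 1) < p ∧ p ≤ iot ℓ 6 + iot ℓ j := by
  have hj6 := iot_mono ℓ hj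
  simp only [barSet, Finset.mem_image, mem_iSet]
  constructor
  · rintro ⟨r, hr, rfl⟩
    rw [bar, if_pos (hr.2.trans hj6)]
    omega
  · intro hp
    refine ⟨p - iot ℓ 6, by omega, ?_⟩
    rw [bar, if_pos (by omega)]
    omega

lemma disjoint_barI2_J3_I5_I6_barI46 (ℓ : ℕ → ℕ) :
    Disjoint (barSet ℓ (iSet ℓ 2 2) ∪ jSet ℓ 3 3 ∪ iSet ℓ 5 5)
      (iSet ℓ 6 6 ∪ barSet ℓ (iSet ℓ 4 6)) := by
  rw [Finset.disjoint_left]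
  intro p hp hq
  simp [jSet, mem_iSet, mem_barSet_iSet] at hp hq
  have := iot_mono ℓ (show 1 ≤ 2 by norm_num)
  have := iot_mono ℓ (show 2 ≤ 3 by norm_num)
  have := iot_mono ℓ (show 3 ≤ 5 by norm_num)
  have := iot_mono ℓ (show 5 ≤ 6 by norm_num)
  omega

theorem pt_is_derivation_general
    {F : Type*} [Field F] (ℓ : ℕ → ℕ) (Γ : AddSubgroup (ℕ → F)) (j0 : Bool) :
    ∀ p ∈ barSet ℓ (iSet ℓ 2 2) ∪ jSet ℓ 3 3 ∪ iSet ℓ 5 5,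
      ∀ u v : CA F ℓ Γ j0,
        pt F ℓ Γ j0 p (brk F ℓ Γ j0 u v) =
          brk F ℓ Γ j0 (pt F ℓ Γ j0 p u) v + brk F ℓ Γ j0 u (pt F ℓ Γ j0 p v) := by
  intro p hp u v
  have hne : ∀ q ∈ iSet ℓ 6 6 ∪ barSet ℓ (iSet ℓ 4 6), p ≠ q := fun q hq hpq =>
    Finset.disjoint_left.1 (disjoint_barI2_J3_I5_I6_barI46 ℓ) hp (hpq ▸ hq)
  simp only [← ptLin_apply]
  exact map_brk_of_commute (ptLin F ℓ Γ j0 p) (ptLin_mulBil p) (commute_ptLin_pstarLin p)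
    (commute_ptLin_ptLin p) (fun q => ptLin_X_of_eq_zero _ rfl)
    (fun q hq => ptLin_X_of_eq_zero _ (Pi.single_eq_of_ne (hne q hq) 1)) u v

/-- For each `p ∈ Ī₂ ∪ J₃ ∪ I₅`, the operator `∂_{t_p}` is a derivation of
the contact Lie algebra `𝒦`. -/
theorem pt_is_derivation
    {F : Type*} [Field F] [CharZero F] (ℓ : ℕ → ℕ) (Γ : AddSubgroup (ℕ → F)) (j0 : Bool)
    (hℓ : 0 < iot ℓ 6)
    (hΓ1 : ∀ p ∈ jSet ℓ 1 3 ∪ iSet ℓ 4 5, (Pi.single p (1 : F) : ℕ → F) ∈ Γ)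
    (hΓ2 : ∀ α ∈ Γ, ∀ p ∈ iSet ℓ 6 6 ∪ barSet ℓ (iSet ℓ 4 6), α p = 0)
    (hΓ3 : ∀ α ∈ Γ, ∀ p, 2 * iot ℓ 6 < p → α p = 0)
    (hΓ0 : (∃ α ∈ Γ, α 0 ≠ 0) → (Pi.single 0 (1 : F) : ℕ → F) ∈ Γ)
    (hJ0 : j0 = false → ∃ α ∈ Γ, α 0 ≠ 0) :
    ∀ p ∈ barSet ℓ (iSet ℓ 2 2) ∪ jSet ℓ 3 3 ∪ iSet ℓ 5 5,
      ∀ u v : CA F ℓ Γ j0,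
        pt F ℓ Γ j0 p (brk F ℓ Γ j0 u v) =
          brk F ℓ Γ j0 (pt F ℓ Γ j0 p u) v + brk F ℓ Γ j0 u (pt F ℓ Γ j0 p v) :=
  pt_is_derivation_general ℓ Γ j0

end
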